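/- Let ζ ∈ ℝ. Then for every t ∈ ℂ with −1/2 < Im t < 0: Re( πi·cosh(πζ) / (sinh(πt)·cosh(π(t−ζ))) ) < 0. (The displayed quantity is f''(t) for the phase function f of the saddle point analysis of 𝓜.) -/

import Mathlib

open MeasureTheory

noncomputable section

/-- The dilogarithm `Li₂(z) = -∫₀¹ Log(1 - t z) dt / t` (principal branch of `Log`). -/
def Li2 (z : ℂ) : ℂ := -∫ t in (0:ℝ)..1, Complex.log (1 - (t:ℂ) * z) / (t:ℂ)

/-- Negative-index polylogarithms: `LiNeg m = Li_{-m}`, with `Li₀(w) = w/(1-w)` and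
`Li_{-m}(w) = w ⬝ d/dw Li_{-m+1}(w)`. -/
def LiNeg : ℕ → ℂ → ℂ
  | 0 => fun w => w / (1 - w)
  | (m+1) => fun w => w * deriv (LiNeg m) w

/-- `LiIdx n = Li_{2-2n}`: the dilogarithm for `n = 0`, and `Li_{-(2n-2)}` for `n ≥ 1`. -/
def LiIdx (n : ℕ) : ℂ → ℂ := if n = 0 then Li2 else LiNeg (2*n - 2)

/-- `L_b(z) = i ∫₀^∞ ( sin(2yz)/(2 sinh(y/b) sinh(by)) - z/y ) dy/y`. -/
def Lb (b : ℝ) (z : ℂ) : ℂ :=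
  Complex.I * ∫ y in Set.Ioi (0:ℝ),
    (Complex.sin (2 * (y:ℂ) * z) / (2 * (Real.sinh (y / b) : ℂ) * (Real.sinh (b * y) : ℂ))
      - z / (y:ℂ)) / (y:ℂ)

/-- Ruijsenaars' hyperbolic gamma function `s_b(z) = exp(L_b(z))`. -/
def sb (b : ℝ) (z : ℂ) : ℂ := Complex.exp (Lb b z)

/-- `Q = b + b⁻¹` as a complex number. -/
def Qb (b : ℝ) : ℂ := (b:ℂ) + (b:ℂ)⁻¹

/-- The function `𝓜(b, ζ', ω')`, the contour being the horizontal line `Im = -Q/4`. -/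
def Mfun (b : ℝ) (ζ : ℝ) (ω : ℂ) : ℂ :=
  sb b ζ * ∫ x : ℝ,
    Complex.exp (Complex.I * (Real.pi:ℂ) * ((x:ℂ) - Complex.I * Qb b / 4)
        * ((ζ:ℂ) - Complex.I * Qb b / 2 + 2 * ω)) *
      sb b ((x:ℂ) - Complex.I * Qb b / 4 - (ζ:ℂ))
        / sb b ((x:ℂ) - Complex.I * Qb b / 4 + Complex.I * Qb b / 2)

/-- The exponent `f_𝓜(ζ, ω)`. -/
def fM (ζ : ℝ) (ω : ℂ) : ℂ :=
  -(Li2 (-Complex.exp (2 * (Real.pi:ℂ) * (ζ:ℂ)))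
    + Li2 (-(Complex.exp (-((Real.pi:ℂ) * (ζ:ℂ))) * Complex.cosh ((Real.pi:ℂ) * ω)
        / Complex.sinh ((Real.pi:ℂ) * ((ζ:ℂ) + ω))))
    - Li2 (Complex.exp ((Real.pi:ℂ) * (ζ:ℂ)) * Complex.cosh ((Real.pi:ℂ) * ω)
        / Complex.sinh ((Real.pi:ℂ) * ((ζ:ℂ) + ω))))
    / (2 * (Real.pi:ℂ) * Complex.I)
  + Complex.I * (Real.pi:ℂ) * (ζ:ℂ)^2
  + Complex.I * (ω - Complex.I / 2) *
      Complex.log (Complex.exp ((Real.pi:ℂ) * (ζ:ℂ)) * Complex.cosh ((Real.pi:ℂ) * ω)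
        / Complex.sinh ((Real.pi:ℂ) * ((ζ:ℂ) + ω)))
  + Complex.I * (Real.pi:ℂ) / 6

/-- The function `𝓠(b, σ', μ')`, the contour being the horizontal line `Im = -3Q/8`. -/
def Qfun (b : ℝ) (σ μ : ℝ) : ℂ :=
  Complex.exp (Complex.I * (Real.pi:ℂ) *
      (1/6 + 7 * (Qb b)^2 / 24 - (μ:ℂ)^2/2 + Complex.I * (μ:ℂ) * Qb b - (σ:ℂ)^2)) * sb b μ *
  ∫ x : ℝ,
    Complex.exp (-(Complex.I * (Real.pi:ℂ) * ((x:ℂ) - 3 * Complex.I * Qb b / 8)^2)) *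
    Complex.exp (2 * Complex.I * (Real.pi:ℂ) * ((x:ℂ) - 3 * Complex.I * Qb b / 8)
      * ((μ:ℂ) - Complex.I * Qb b / 2)) *
    sb b ((x:ℂ) - 3 * Complex.I * Qb b / 8 + (σ:ℂ)) *
    sb b ((x:ℂ) - 3 * Complex.I * Qb b / 8 - (σ:ℂ))

/-- The exponent `f_𝓠(σ, μ)`. -/
def fQ (σ μ : ℝ) : ℂ :=
  -(Li2 (-Complex.exp (2 * (Real.pi:ℂ) * (μ:ℂ)))) / (2 * (Real.pi:ℂ) * Complex.I)
  - Li2 (Complex.exp (-(2 * (Real.pi:ℂ) * (σ:ℂ))) *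
      ((Real.cosh (2*Real.pi*σ) : ℂ) + Complex.I *
        (Real.sqrt (Real.exp (2*Real.pi*μ) - Real.sinh (2*Real.pi*σ)^2) : ℂ)))
    / (2 * (Real.pi:ℂ) * Complex.I)
  - Li2 (Complex.exp (2 * (Real.pi:ℂ) * (σ:ℂ)) *
      ((Real.cosh (2*Real.pi*σ) : ℂ) + Complex.I *
        (Real.sqrt (Real.exp (2*Real.pi*μ) - Real.sinh (2*Real.pi*σ)^2) : ℂ)))
    / (2 * (Real.pi:ℂ) * Complex.I)
  + (1/2 + Complex.I * (μ:ℂ)) *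
      Complex.log (-(Real.cosh (2*Real.pi*σ) : ℂ) - Complex.I *
        (Real.sqrt (Real.exp (2*Real.pi*μ) - Real.sinh (2*Real.pi*σ)^2) : ℂ))
  - (Real.pi:ℂ) * (μ:ℂ) + 5 * (Real.pi:ℂ) * Complex.I / 12

/-- The phase function `f(t)` of the saddle point analysis of `𝓜`. -/
def fMt (ζ : ℝ) (ω t : ℂ) : ℂ :=
  -(Li2 (-Complex.exp (2*(Real.pi:ℂ)*(ζ:ℂ)))
    + Li2 (-Complex.exp (2*(Real.pi:ℂ)*(t-(ζ:ℂ))))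
    - Li2 (-Complex.exp (2*(Real.pi:ℂ)*(t+Complex.I/2)))) / (2*(Real.pi:ℂ)*Complex.I)
  + Complex.I*(Real.pi:ℂ)*(ζ:ℂ)^2 + 2*Complex.I*(Real.pi:ℂ)*t*ω + (Real.pi:ℂ)*t
  + Complex.I*(Real.pi:ℂ)/6

/-- The amplitude `g(t)` of the saddle point analysis of `𝓜`. -/
def gM (t : ℂ) : ℂ :=
  Complex.exp ((Real.pi:ℂ)*t - Complex.log (1 - Complex.exp (2*(Real.pi:ℂ)*t)) / 2)

/-- The error term `E(τ, t)` from the semiclassical analysis of `𝓜`. -/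
def Efun (ζ τ : ℝ) (t : ℂ) : ℂ :=
  Complex.I * (Li2 (Complex.exp (2*(Real.pi:ℂ)*t))
      - Li2 (Complex.exp (Complex.I*(Real.pi:ℂ)*(τ:ℂ) + 2*(Real.pi:ℂ)*t))) / (2*(Real.pi:ℂ)*(τ:ℂ))
  + Complex.log (1 - Complex.exp (2*(Real.pi:ℂ)*t)) / 2
  + (Complex.I*(Real.pi:ℂ)*(τ:ℂ)/12) *
      (Complex.exp (2*(Real.pi:ℂ)*t + Complex.I*(Real.pi:ℂ)*(τ:ℂ))
          / (Complex.exp (2*(Real.pi:ℂ)*t + Complex.I*(Real.pi:ℂ)*(τ:ℂ)) - 1)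
        - Complex.exp (2*(Real.pi:ℂ)*(ζ:ℂ)) / (Complex.exp (2*(Real.pi:ℂ)*(ζ:ℂ)) + 1)
        - Complex.exp (2*(Real.pi:ℂ)*t)
          / (Complex.exp (2*(Real.pi:ℂ)*(ζ:ℂ)) + Complex.exp (2*(Real.pi:ℂ)*t)) + 2)

/-- The phase function `f(t)` of the saddle point analysis of `𝓠`. -/
def fQt (σ μ : ℝ) (t : ℂ) : ℂ :=
  -(Li2 (-Complex.exp (2*(Real.pi:ℂ)*(μ:ℂ)))
    + Li2 (-Complex.exp (2*(Real.pi:ℂ)*(t-(σ:ℂ))))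
    + Li2 (-Complex.exp (2*(Real.pi:ℂ)*(t+(σ:ℂ))))) / (2*(Real.pi:ℂ)*Complex.I)
  + 2*Complex.I*(Real.pi:ℂ)*(μ:ℂ)*t + (Real.pi:ℂ)*(t-(μ:ℂ)) + 5*Complex.I*(Real.pi:ℂ)/12

/-- The amplitude `g(t)` of the saddle point analysis of `𝓠`. -/
def gQ (μ : ℝ) (t : ℂ) : ℂ := Complex.exp ((Real.pi:ℂ)*(t-(μ:ℂ)))

end

/-!
The numerator is `i` times the positive real `π cosh(πζ)`, so the real part of the quotient has
the sign of the imaginary part of the denominator. By the product-to-sum formula,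
`sinh(πt) cosh(π(t - ζ)) = (sinh(π(2t - ζ)) + sinh(πζ)) / 2`, and the second summand is real,
so that imaginary part is `cosh(π(2 Re t - ζ)) sin(2π Im t) / 2`, negative in the strip.
-/

open Complex

namespace Complex

theorem sinh_im (z : ℂ) : (sinh z).im = Real.cosh z.re * Real.sin z.im := by
  rw [← re_add_im z, sinh_add, sinh_mul_I, cosh_mul_I]
  simp [sin_ofReal_re, cosh_ofReal_re]

theorem sinh_mul_cosh (z w : ℂ) : sinh z * cosh w = (sinh (z + w) + sinh (z - w)) / 2 := by
  rw [sinh_add, sinh_sub]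
  ring

theorem im_sinh_mul_cosh_of_im_eq {z w : ℂ} (h : z.im = w.im) :
    (sinh z * cosh w).im = Real.cosh (z.re + w.re) * Real.sin (2 * z.im) / 2 := by
  simp [sinh_mul_cosh, sinh_im, h, two_mul]

theorem re_ofReal_mul_I_div (c : ℝ) (w : ℂ) : ((c : ℂ) * I / w).re = c * w.im / normSq w := by
  simp [div_re]

theorem re_ofReal_mul_I_div_neg {c : ℝ} (hc : 0 < c) {w : ℂ} (hw : w.im < 0) :
    ((c : ℂ) * I / w).re < 0 := by
  rw [re_ofReal_mul_I_div]
  exact div_neg_of_neg_of_pos (mul_neg_of_pos_of_neg hc hw) (normSq_pos.2 fun h ↦ by simp [h] at hw)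

end Complex

/-- `Re f''(t) < 0` in the strip `-1/2 < Im t < 0` for the
phase function of `𝓜`. -/
theorem M_phase_second_derivative_re_neg (ζ : ℝ) (t : ℂ)
    (h1 : -1/2 < t.im) (h2 : t.im < 0) :
    ((Real.pi:ℂ) * Complex.I * Complex.cosh ((Real.pi:ℂ)*(ζ:ℂ))
      / (Complex.sinh ((Real.pi:ℂ)*t) * Complex.cosh ((Real.pi:ℂ)*(t-(ζ:ℂ))))).re < 0 := by
  have hnum : (Real.pi : ℂ) * I * cosh (Real.pi * ζ)
      = ((Real.pi * Real.cosh (Real.pi * ζ) : ℝ) : ℂ) * I := by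
    push_cast
    ring
  have hsin : Real.sin (2 * (Real.pi * t.im)) < 0 :=
    Real.sin_neg_of_neg_of_neg_pi_lt (by nlinarith [Real.pi_pos]) (by nlinarith [Real.pi_pos])
  rw [hnum]
  refine re_ofReal_mul_I_div_neg (by positivity) ?_
  rw [im_sinh_mul_cosh_of_im_eq (by simp)]
  simp only [re_ofReal_mul, im_ofReal_mul]
  nlinarith [Real.cosh_pos (Real.pi * t.re + Real.pi * (t - ζ).re)]
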